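/- arXiv:1307.6803 — 3 statements merged into one kernel-verified Lean document; each statement's English description precedes it below -/
import Mathlib

section
/- Let u : [0,1] → ℝ be three times continuously differentiable with u(0) = u(1) = 0 and u'(1) = 0. Then 2 ∫₀¹ (1+x) · u(x) · u'''(x) dx = 3 ∫₀¹ (u'(x))² dx + (u'(0))². -/
open MeasureTheory intervalIntegral

theorem stmt2 (u : ℝ → ℝ) (hu : ContDiff ℝ 3 u)
    (h0 : u 0 = 0) (h1 : u 1 = 0) (h1' : deriv u 1 = 0) :
    2 * ∫ x in (0:ℝ)..1, (1 + x) * u x * iteratedDeriv 3 u x =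
      3 * (∫ x in (0:ℝ)..1, (deriv u x)^2) + (deriv u 0)^2 := by
  have hu' : ContDiff ℝ 2 (deriv u) :=
    (contDiff_succ_iff_deriv.mp (show ContDiff ℝ ((2:ℕ∞)+1) u by exact_mod_cast hu)).2.2
  have hu'' : ContDiff ℝ 1 (deriv (deriv u)) :=
    (contDiff_succ_iff_deriv.mp (show ContDiff ℝ ((1:ℕ∞)+1) (deriv u) by exact_mod_cast hu')).2.2
  have h3 : iteratedDeriv 3 u = deriv (deriv (deriv u)) := by
    simp [iteratedDeriv_succ, iteratedDeriv_zero]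
  have hcu : Continuous u := hu.continuous
  have hcu' : Continuous (deriv u) := hu'.continuous
  have hcu'' : Continuous (deriv (deriv u)) := hu''.continuous
  have hcu''' : Continuous (deriv (deriv (deriv u))) :=
    (contDiff_succ_iff_deriv.mp (show ContDiff ℝ ((0:ℕ∞)+1) (deriv (deriv u)) by exact_mod_cast hu'')).2.2.continuous
  have hdu : ∀ x : ℝ, HasDerivAt u (deriv u x) x :=
    fun x => (hu.differentiable (by norm_num)).differentiableAt.hasDerivAt
  have hdu' : ∀ x : ℝ, HasDerivAt (deriv u) (deriv (deriv u) x) x :=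
    fun x => (hu'.differentiable (by norm_num)).differentiableAt.hasDerivAt
  have hdu'' : ∀ x : ℝ, HasDerivAt (deriv (deriv u)) (deriv (deriv (deriv u)) x) x :=
    fun x => (hu''.differentiable (by norm_num)).differentiableAt.hasDerivAt
  set F : ℝ → ℝ := fun x =>
    (1+x)*u x*deriv (deriv u) x*2 - u x*deriv u x*2 - (1+x)*(deriv u x)^2 with hF
  have hFd : ∀ x : ℝ, HasDerivAt F
      (2*(1+x)*u x*deriv (deriv (deriv u)) x - 3*(deriv u x)^2) x := by
    intro x
    have h : HasDerivAt F
        ((((0+1)*(u x) + (1+x)*(deriv u x))*(deriv (deriv u) x)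
          + ((1+x)*(u x))*(deriv (deriv (deriv u)) x)) * 2
         - ((deriv u x)*(deriv u x) + (u x)*(deriv (deriv u) x)) * 2
         - ((0+1)*((deriv u x)^2) + (1+x)*(2*(deriv u x)^(2-1)*(deriv (deriv u) x)))) x := by
      apply HasDerivAt.sub
      apply HasDerivAt.sub
      · exact ((((hasDerivAt_const x (1:ℝ)).add (hasDerivAt_id x)).mul (hdu x)).mul
          (hdu'' x)).mul_const 2
      · exact ((hdu x).mul (hdu' x)).mul_const 2
      · exact ((hasDerivAt_const x (1:ℝ)).add (hasDerivAt_id x)).mul ((hdu' x).pow 2)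
    convert h using 1
    ring
  have hInt : IntervalIntegrable
      (fun x => 2*(1+x)*u x*deriv (deriv (deriv u)) x - 3*(deriv u x)^2) volume 0 1 := by
    apply Continuous.intervalIntegrable
    continuity
  have key := intervalIntegral.integral_eq_sub_of_hasDerivAt
    (f := F) (fun x _ => hFd x) hInt
  have hInt1 : IntervalIntegrable (fun x => 2*(1+x)*u x*deriv (deriv (deriv u)) x) volume 0 1 := by
    apply Continuous.intervalIntegrable; continuity
  have hInt2 : IntervalIntegrable (fun x => 3*(deriv u x)^2) volume 0 1 := by
    apply Continuous.intervalIntegrable; continuity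
  rw [intervalIntegral.integral_sub hInt1 hInt2] at key
  have e1 : (∫ x in (0:ℝ)..1, 2*(1+x)*u x*deriv (deriv (deriv u)) x)
      = 2 * ∫ x in (0:ℝ)..1, (1 + x) * u x * iteratedDeriv 3 u x := by
    rw [h3, ← intervalIntegral.integral_const_mul]
    congr 1; ext x; ring
  have e2 : (∫ x in (0:ℝ)..1, 3*(deriv u x)^2)
      = 3 * ∫ x in (0:ℝ)..1, (deriv u x)^2 := by
    rw [← intervalIntegral.integral_const_mul]
  have hFval : F 1 - F 0 = (deriv u 0)^2 := by
    simp only [hF]; rw [h0, h1, h1']; ring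
  rw [e1, e2, hFval] at key
  linarith
end

section
/- Let X₂ be a Polish space, X₁ a topological space admitting a sequence of continuous real-valued functions separating its points, and I : X₂ → X₁ a continuous injection. Then for every Borel set B ⊆ X₂, the image I(B) is Borel in X₁. -/
open MeasureTheory

theorem stmt12 {X₁ X₂ : Type*} [TopologicalSpace X₁] [TopologicalSpace X₂]
    [PolishSpace X₂]
    [MeasurableSpace X₁] [BorelSpace X₁] [MeasurableSpace X₂] [BorelSpace X₂]
    (f : ℕ → X₁ → ℝ) (hf : ∀ n, Continuous (f n))
    (hsep : ∀ a b : X₁, (∀ n, f n a = f n b) → a = b)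
    (I : X₂ → X₁) (hI : Continuous I) (hinj : Function.Injective I)
    (B : Set X₂) (hB : MeasurableSet B) :
    MeasurableSet (I '' B) := by
  set F : X₁ → (ℕ → ℝ) := fun x n => f n x with hF
  have hFc : Continuous F := continuous_pi fun n => hf n
  have hFinj : Function.Injective F := fun a b h => hsep a b (fun n => congrFun h n)
  have hcomp : MeasurableSet ((F ∘ I) '' B) :=
    hB.image_of_continuousOn_injOn (hFc.comp hI).continuousOn
      ((hFinj.comp hinj).injOn)
  have : I '' B = F ⁻¹' ((F ∘ I) '' B) := by
    rw [Set.image_comp]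
    exact (Set.preimage_image_eq _ hFinj).symm
  rw [this]
  exact hFc.measurable hcomp
end

section
/- Let u : [0,1] → ℝ be four times continuously differentiable with u(0)=u(1)=0, u'(1)=0, and u''(0)=0, and let ε > 0. Suppose u''' + ε u'''' = g on (0,1). Then ‖u''‖_{L^∞(0,1)} ≤ C ‖g‖_{L^p(0,1)} for a constant C independent of ε and u, for any fixed p > 1. -/
/-!
Write `v = u''` and `M = ∫₀¹ |u''' + ε u''''|`. Integrating the equation once, `v + ε v'` stays
within `M` of its value `ε v'(0)` at `0`. The function `φ x = 1 - exp (-x/ε)` solves `φ + ε φ' = 1`,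
`φ 0 = 0`, so `r = v - ε v'(0) φ` has `|r + ε r'| ≤ M` and `r 0 = 0`; the integrating factor
`exp (x/ε)` turns this into `|r| ≤ M φ`. The boundary conditions make `∫₀¹ x v(x) dx` vanish, and
testing `v = ε v'(0) φ + r` against `x` then forces `ε |v'(0)| ≤ M`. Hence `|v| ≤ 2 M`, and Hölder's
inequality on `[0, 1]` bounds `M` by the `L^p` norm of `g`.
-/

open MeasureTheory intervalIntegral
open Real Set

theorem abs_le_mul_one_sub_exp_of_abs_add_mul_deriv_le {ε b K : ℝ} (hε : 0 < ε)
    {f f' : ℝ → ℝ} (hf : ∀ t ∈ Icc 0 b, HasDerivAt f (f' t) t) (hf0 : f 0 = 0)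
    (hK : ∀ t ∈ Ico 0 b, |f t + ε * f' t| ≤ K) :
    ∀ s ∈ Icc 0 b, |f s| ≤ K * (1 - exp (-(s / ε))) := by
  have hexp (t : ℝ) : HasDerivAt (fun t => exp (t / ε)) (exp (t / ε) / ε) t := by
    simpa [div_eq_mul_inv, mul_comm] using ((hasDerivAt_id t).div_const ε).exp
  -- integrating factor: `(exp (t/ε) f t)' = exp (t/ε) / ε * (f t + ε f' t)`
  have hbound := image_norm_le_of_norm_deriv_right_le_deriv_boundary'
    (f := fun t => exp (t / ε) * f t) (f' := fun t => exp (t / ε) / ε * (f t + ε * f' t))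
    (B := fun t => K * (exp (t / ε) - 1)) (B' := fun t => K * (exp (t / ε) / ε))
    (fun t ht => ((hexp t).mul (hf t ht)).continuousAt.continuousWithinAt)
    (fun t ht => (((hexp t).mul (hf t (Ico_subset_Icc_self ht))).congr_deriv
      (by field_simp)).hasDerivWithinAt)
    (by simp [hf0]) (by fun_prop)
    (fun t _ => (((hexp t).sub_const 1).const_mul K).hasDerivWithinAt)
    (fun t ht => by
      rw [norm_mul, Real.norm_of_nonneg (by positivity), mul_comm K, Real.norm_eq_abs]
      exact mul_le_mul_of_nonneg_left (hK t ht) (by positivity))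
  intro s hs
  have hs' := hbound hs
  rw [norm_mul, Real.norm_of_nonneg (exp_pos _).le, Real.norm_eq_abs] at hs'
  have hinv : exp (-(s / ε)) * exp (s / ε) = 1 := by rw [← exp_add]; simp
  calc |f s| = exp (-(s / ε)) * (exp (s / ε) * |f s|) := by rw [← mul_assoc, hinv, one_mul]
    _ ≤ exp (-(s / ε)) * (K * (exp (s / ε) - 1)) := by gcongr
    _ = K * (1 - exp (-(s / ε))) := by linear_combination K * hinv

theorem integral_mul_iteratedDeriv_two {u : ℝ → ℝ} (hu : ContDiff ℝ 2 u) (a b : ℝ) :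
    ∫ x in a..b, x * iteratedDeriv 2 u x = b * deriv u b - a * deriv u a - (u b - u a) := by
  have hu' : ContDiff ℝ 1 (deriv u) := hu.iterate_deriv' 1 1
  rw [iteratedDeriv_succ, iteratedDeriv_one,
    intervalIntegral.integral_mul_deriv_eq_deriv_mul (fun x _ => hasDerivAt_id' x)
      (fun x _ => (hu'.differentiable one_ne_zero x).hasDerivAt) intervalIntegrable_const
      ((hu'.continuous_deriv le_rfl).intervalIntegrable _ _)]
  simp only [one_mul,
    integral_deriv_eq_sub (fun x _ => hu.differentiable (by norm_num) x)
      (hu'.continuous.intervalIntegrable _ _)]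

theorem abs_le_of_integral_mul_add_eq_zero {w φ r : ℝ → ℝ} {a b c M : ℝ} (hab : a ≤ b)
    (hw : Continuous w) (hφ : Continuous φ) (hr : Continuous r)
    (hw0 : ∀ t ∈ Icc a b, 0 ≤ w t) (hpos : 0 < ∫ t in a..b, w t * φ t)
    (hrφ : ∀ t ∈ Icc a b, |r t| ≤ M * φ t) (h : ∫ t in a..b, w t * (c * φ t + r t) = 0) :
    |c| ≤ M := by
  have hsplit : c * ∫ t in a..b, w t * φ t = -∫ t in a..b, w t * r t := by
    simp only [mul_add, mul_left_comm _ c] at h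
    rw [intervalIntegral.integral_add (f := fun t => c * (w t * φ t)) (g := fun t => w t * r t)
      ((continuous_const.mul (hw.mul hφ)).intervalIntegrable _ _)
      ((hw.mul hr).intervalIntegrable _ _), intervalIntegral.integral_const_mul] at h
    linarith
  have hwr : |∫ t in a..b, w t * r t| ≤ M * ∫ t in a..b, w t * φ t := by
    rw [← intervalIntegral.integral_const_mul]
    refine abs_integral_le_integral_abs hab |>.trans <| integral_mono_on hab
      ((hw.mul hr).abs.intervalIntegrable _ _)
      ((continuous_const.mul (hw.mul hφ)).intervalIntegrable _ _) fun t ht => ?_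
    rw [abs_mul, abs_of_nonneg (hw0 t ht), mul_left_comm]
    exact mul_le_mul_of_nonneg_left (hrφ t ht) (hw0 t ht)
  rw [← mul_le_mul_iff_left₀ hpos, ← abs_of_pos hpos, ← abs_mul, hsplit, abs_neg, abs_of_pos hpos]
  exact hwr

theorem integral_le_integral_rpow_one_div {α : Type*} [MeasurableSpace α] {μ : Measure α}
    [IsProbabilityMeasure μ] {p : ℝ} (hp : 1 < p) {f : α → ℝ} (hf0 : 0 ≤ᵐ[μ] f)
    (hf : MemLp f (ENNReal.ofReal p) μ) :
    ∫ x, f x ∂μ ≤ (∫ x, f x ^ p ∂μ) ^ (1 / p) := by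
  simpa using integral_mul_le_Lp_mul_Lq_of_nonneg (Real.HolderConjugate.conjExponent hp)
    hf0 (ae_of_all μ fun _ => zero_le_one) hf (memLp_const 1)

theorem norm_sub_le_integral_norm_of_mem_Icc {E : Type*} [NormedAddCommGroup E]
    [NormedSpace ℝ E] {F F' : ℝ → E} {a b t : ℝ} (hF : ∀ s, HasDerivAt F (F' s) s)
    (hF' : Continuous F') (ht : t ∈ Icc a b) :
    ‖F t - F a‖ ≤ ∫ s in a..b, ‖F' s‖ :=
  calc ‖F t - F a‖ ≤ ∫ s in a..t, ‖F' s‖ :=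
        norm_sub_le_integral_of_norm_deriv_le_of_le ht.1
          (fun s _ => (hF s).continuousAt.continuousWithinAt)
          (fun s _ => (hF s).differentiableAt.differentiableWithinAt)
          (ae_of_all _ fun s _ => by rw [(hF s).deriv])
          (hF'.norm.intervalIntegrable _ _)
    _ ≤ ∫ s in a..b, ‖F' s‖ := integral_mono_interval le_rfl ht.1 ht.2
          (ae_of_all _ fun _ => norm_nonneg _) (hF'.norm.intervalIntegrable _ _)

theorem abs_le_two_mul_integral_abs_add_mul_deriv {ε : ℝ} (hε : 0 < ε) {v : ℝ → ℝ}
    (hv : ContDiff ℝ 2 v) (hv0 : v 0 = 0) (hmom : ∫ t in (0:ℝ)..1, t * v t = 0)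
    {x : ℝ} (hx : x ∈ Icc (0:ℝ) 1) :
    |v x| ≤ 2 * ∫ t in (0:ℝ)..1, |deriv v t + ε * deriv (deriv v) t| := by
  set w := deriv v
  set a := w 0
  set M := ∫ t in (0:ℝ)..1, |w t + ε * deriv w t|
  have hw1 : ContDiff ℝ 1 w := hv.iterate_deriv' 1 1
  have hvw (t : ℝ) : HasDerivAt v (w t) t := (hv.differentiable two_ne_zero t).hasDerivAt
  have hww (t : ℝ) : HasDerivAt w (deriv w t) t := (hw1.differentiable one_ne_zero t).hasDerivAt
  have hM : 0 ≤ M := integral_nonneg zero_le_one fun t _ => abs_nonneg _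
  have hfirst : ∀ t ∈ Icc (0:ℝ) 1, |v t + ε * w t - ε * a| ≤ M := fun t ht => by
    simpa [hv0, a] using norm_sub_le_integral_norm_of_mem_Icc
      (fun s => (hvw s).add ((hww s).const_mul ε))
      (hw1.continuous.add (continuous_const.mul (hw1.continuous_deriv le_rfl))) ht
  set φ : ℝ → ℝ := fun t => 1 - exp (-(t / ε))
  have hφ (t : ℝ) : HasDerivAt φ (exp (-(t / ε)) / ε) t := by
    simpa [φ, div_eq_mul_inv, mul_comm] using (((hasDerivAt_id t).div_const ε).neg.exp).const_sub 1
  have hr := abs_le_mul_one_sub_exp_of_abs_add_mul_deriv_le hε (b := 1)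
    (f := fun t => v t - ε * a * φ t)
    (fun t _ => (hvw t).sub ((hφ t).const_mul (ε * a))) (by simp [φ, hv0])
    (fun t ht => by
      convert hfirst t (Ico_subset_Icc_self ht) using 2
      field_simp
      ring)
  have ha : |ε * a| ≤ M := by
    refine abs_le_of_integral_mul_add_eq_zero zero_le_one continuous_id (by fun_prop)
      (by fun_prop) (fun t ht => ht.1) ?_ hr ?_
    · refine intervalIntegral_pos_of_pos_on (Continuous.intervalIntegrable (by fun_prop) _ _)
        (fun t ht => mul_pos ht.1 ?_) zero_lt_one
      simpa [φ] using div_pos ht.1 hε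
    · simpa only [φ, id, add_sub_cancel] using hmom
  have hφx : 0 ≤ φ x ∧ φ x ≤ 1 := by
    simpa [φ, (exp_pos _).le] using div_nonneg hx.1 hε.le
  calc |v x| = |ε * a * φ x + (v x - ε * a * φ x)| := by ring_nf
    _ ≤ |ε * a| * φ x + M * φ x := (abs_add_le _ _).trans
      (add_le_add (by rw [abs_mul, abs_of_nonneg hφx.1]) (hr x hx))
    _ ≤ 2 * M := by nlinarith

theorem integral_zero_one_abs_le_integral_abs_rpow {p : ℝ} (hp : 1 < p) {f : ℝ → ℝ}
    (hf : Continuous f) :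
    ∫ t in (0:ℝ)..1, |f t| ≤ (∫ t in (0:ℝ)..1, |f t| ^ p) ^ (1 / p) := by
  have : IsProbabilityMeasure (volume.restrict (Ioc (0:ℝ) 1)) := ⟨by simp⟩
  obtain ⟨C, hC⟩ := (isCompact_Icc (a := (0:ℝ)) (b := 1)).exists_bound_of_continuousOn
    hf.abs.continuousOn
  rw [integral_of_le zero_le_one, integral_of_le zero_le_one]
  refine integral_le_integral_rpow_one_div hp (ae_of_all _ fun t => abs_nonneg (f t)) ?_
  refine MemLp.of_bound hf.abs.aestronglyMeasurable C ?_
  filter_upwards [ae_restrict_mem measurableSet_Ioc] with t ht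
  exact hC t (Ioc_subset_Icc_self ht)

theorem stmt18 (p : ℝ) (hp : 1 < p) :
    ∃ C : ℝ, 0 < C ∧ ∀ ε : ℝ, 0 < ε → ∀ u g : ℝ → ℝ, ContDiff ℝ 4 u →
      u 0 = 0 → u 1 = 0 → deriv u 1 = 0 → iteratedDeriv 2 u 0 = 0 →
      (∀ x ∈ Set.Ioo (0:ℝ) 1, iteratedDeriv 3 u x + ε * iteratedDeriv 4 u x = g x) →
      ∀ x ∈ Set.Icc (0:ℝ) 1, |iteratedDeriv 2 u x| ≤
        C * ((∫ y in (0:ℝ)..1, |g y|^p) ^ (1/p)) := by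
  refine ⟨2, two_pos, fun ε hε u g hu hu0 hu1 hu'1 hv0 hg x hx => ?_⟩
  have hv : ContDiff ℝ 2 (iteratedDeriv 2 u) := by
    rw [iteratedDeriv_eq_iterate]
    exact_mod_cast hu.iterate_deriv' 2 2
  have hmom : ∫ t in (0:ℝ)..1, t * iteratedDeriv 2 u t = 0 := by
    simp [integral_mul_iteratedDeriv_two (hu.of_le (by norm_num)), hu0, hu1, hu'1]
  have h3 : deriv (iteratedDeriv 2 u) = iteratedDeriv 3 u := iteratedDeriv_succ.symm
  have h4 : deriv (iteratedDeriv 3 u) = iteratedDeriv 4 u := iteratedDeriv_succ.symm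
  have hcont : Continuous fun t => iteratedDeriv 3 u t + ε * iteratedDeriv 4 u t :=
    (hu.continuous_iteratedDeriv 3 (by norm_num)).add
      (continuous_const.mul (hu.continuous_iteratedDeriv 4 (by norm_num)))
  have hgp : ∫ t in (0:ℝ)..1, |iteratedDeriv 3 u t + ε * iteratedDeriv 4 u t| ^ p
      = ∫ t in (0:ℝ)..1, |g t| ^ p :=
    integral_congr_uIoo fun t ht => by
      rw [uIoo_of_le zero_le_one] at ht
      simp only [hg t ht]
  calc |iteratedDeriv 2 u x|
      ≤ 2 * ∫ t in (0:ℝ)..1, |iteratedDeriv 3 u t + ε * iteratedDeriv 4 u t| := by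
        simpa only [h3, h4] using abs_le_two_mul_integral_abs_add_mul_deriv hε hv hv0 hmom hx
    _ ≤ 2 * (∫ t in (0:ℝ)..1, |g t| ^ p) ^ (1 / p) := by
        rw [← hgp]
        gcongr
        exact integral_zero_one_abs_le_integral_abs_rpow hp hcont
end
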